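/- Let f : ℝ → ℝ be differentiable with f(u)/u < f′(u) for all u ≠ 0, let θ > 2, suppose the AR condition with exponent θ holds: 0 < θ·F(u) ≤ u·f(u) for all u ≠ 0, where F(u) := ∫₀ᵘ f(s) ds, let w ≠ 0 be real and A > 0, and let t* > 0 be the unique positive number with f(t*·w)·w = t*·A. Define h(t) := (t²/2)·A − F(t·w) for t > 0. Then h(t) < h(t*) for every t > 0 with t ≠ t*, and h(t*) ≥ (1/2 − 1/θ)·A·(t*)² > 0. -/

import Mathlib

open MeasureTheory

/-- The primitive `F(u) = ∫₀ᵘ f(s) ds`. -/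
noncomputable def primitive (f : ℝ → ℝ) (u : ℝ) : ℝ := ∫ s in (0:ℝ)..u, f s

/-!
Write `g(t) = f(t w) w`, so that `h'(t) = t A - g(t) = t (A - g(t)/t)`. Condition (c) passes from
`f` to `g`, and it says exactly that `g(t)/t` has positive derivative on `(0, ∞)`. Hence `g(t)/t`
crosses the value `A` only once, at `t*`, so `h` increases on `(0, t*]` and decreases on `[t*, ∞)`.
At the Nehari point, AR gives `θ F(t* w) ≤ t* w f(t* w) = t*² A`, which is the lower bound.
-/

open Set

theorem hasDerivAt_primitive {f : ℝ → ℝ} (hf : Continuous f) (u : ℝ) :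
    HasDerivAt (primitive f) (f u) u :=
  (hf.integral_hasStrictDerivAt 0 u).hasDerivAt

theorem strictMonoOn_div_self_Ioi {g : ℝ → ℝ} (hg : DifferentiableOn ℝ g (Ioi 0))
    (hlt : ∀ t, 0 < t → g t / t < deriv g t) :
    StrictMonoOn (fun t => g t / t) (Ioi 0) := by
  have hderiv : ∀ t, 0 < t →
      HasDerivAt (fun t => g t / t) ((deriv g t * t - g t * 1) / t ^ 2) t := fun t ht =>
    (hg.differentiableAt (Ioi_mem_nhds ht)).hasDerivAt.div (hasDerivAt_id t) ht.ne'
  refine strictMonoOn_of_deriv_pos (convex_Ioi 0)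
    (fun t ht => (hderiv t ht).continuousAt.continuousWithinAt) fun t ht => ?_
  rw [interior_Ioi] at ht
  rw [(hderiv t ht).deriv]
  have := (div_lt_iff₀ ht).mp (hlt t ht)
  exact div_pos (by linarith) (pow_pos ht 2)

theorem div_lt_deriv_comp_mul {f : ℝ → ℝ} (hf : Differentiable ℝ f)
    (hc : ∀ u, u ≠ 0 → f u / u < deriv f u) {w : ℝ} (hw : w ≠ 0) {t : ℝ} (ht : t ≠ 0) :
    f (t * w) * w / t < deriv (fun t => f (t * w) * w) t := by
  have hd : HasDerivAt (fun t => f (t * w) * w) (deriv f (t * w) * w * w) t :=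
    ((hf (t * w)).hasDerivAt.comp t (hasDerivAt_mul_const w)).mul_const w
  rw [hd.deriv]
  calc f (t * w) * w / t = f (t * w) / (t * w) * (w * w) := by field_simp
    _ < deriv f (t * w) * (w * w) :=
      mul_lt_mul_of_pos_right (hc _ (mul_ne_zero ht hw)) (mul_self_pos.mpr hw)
    _ = deriv f (t * w) * w * w := by ring

theorem hasDerivAt_fibering {f : ℝ → ℝ} (hf : Continuous f) (w A t : ℝ) :
    HasDerivAt (fun t => t ^ 2 / 2 * A - primitive f (t * w)) (t * A - f (t * w) * w) t := by
  have hsq : HasDerivAt (fun t : ℝ => t ^ 2 / 2 * A) (t * A) t := by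
    simpa using ((hasDerivAt_pow 2 t).div_const (2 : ℝ)).mul_const A
  exact hsq.sub ((hasDerivAt_primitive hf (t * w)).comp (h := fun t => t * w) t
    (hasDerivAt_mul_const w))

theorem lt_of_deriv_pos_Ioo_of_deriv_neg_Ioi {h : ℝ → ℝ} {a c : ℝ} (hac : a < c)
    (hh : ContinuousOn h (Ioi a)) (hpos : ∀ t ∈ Ioo a c, 0 < deriv h t)
    (hneg : ∀ t ∈ Ioi c, deriv h t < 0) {t : ℝ} (ht : a < t) (htc : t ≠ c) : h t < h c := by
  rcases htc.lt_or_gt with hlt | hgt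
  · have hmono := strictMonoOn_of_deriv_pos (convex_Ioc a c) (hh.mono Ioc_subset_Ioi_self)
      (by simpa only [interior_Ioc] using hpos)
    exact hmono ⟨ht, hlt.le⟩ ⟨hac, le_rfl⟩ hlt
  · have hanti := strictAntiOn_of_deriv_neg (convex_Ici c) (hh.mono (Ici_subset_Ioi.mpr hac))
      (by simpa only [interior_Ici] using hneg)
    exact hanti self_mem_Ici hgt.le hgt

theorem fibering_functional_strict_max_general (f : ℝ → ℝ) (hf : Differentiable ℝ f)
    (hc : ∀ u : ℝ, u ≠ 0 → f u / u < deriv f u)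
    (θ : ℝ) (hθ : 2 < θ)
    (hAR : ∀ u : ℝ, u ≠ 0 → 0 < θ * primitive f u ∧ θ * primitive f u ≤ u * f u)
    (w A tstar : ℝ) (hw : w ≠ 0) (hA : 0 < A) (htstar : 0 < tstar)
    (heq : f (tstar * w) * w = tstar * A) :
    (∀ t : ℝ, 0 < t → t ≠ tstar →
      t ^ 2 / 2 * A - primitive f (t * w)
        < tstar ^ 2 / 2 * A - primitive f (tstar * w)) ∧
    (1 / 2 - 1 / θ) * A * tstar ^ 2
        ≤ tstar ^ 2 / 2 * A - primitive f (tstar * w) ∧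
    0 < (1 / 2 - 1 / θ) * A * tstar ^ 2 := by
  have hθ0 : 0 < θ := by linarith
  have hmono : StrictMonoOn (fun t => f (t * w) * w / t) (Ioi 0) :=
    strictMonoOn_div_self_Ioi ((hf.comp (differentiable_id.mul_const w)).mul_const w).differentiableOn
      fun t ht => div_lt_deriv_comp_mul hf hc hw ht.ne'
  have hnehari : f (tstar * w) * w / tstar = A := by rw [heq, mul_div_cancel_left₀ A htstar.ne']
  have hderiv : ∀ t, 0 < t → deriv (fun t => t ^ 2 / 2 * A - primitive f (t * w)) t
      = t * (A - f (t * w) * w / t) := fun t ht => by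
    rw [(hasDerivAt_fibering hf.continuous w A t).deriv]
    field_simp
  have hF : θ * primitive f (tstar * w) ≤ tstar ^ 2 * A :=
    calc θ * primitive f (tstar * w) ≤ tstar * w * f (tstar * w) :=
          (hAR _ (mul_ne_zero htstar.ne' hw)).2
      _ = tstar * (f (tstar * w) * w) := by ring
      _ = tstar ^ 2 * A := by rw [heq]; ring
  refine ⟨fun t ht htne => lt_of_deriv_pos_Ioo_of_deriv_neg_Ioi htstar
      (fun s _ => (hasDerivAt_fibering hf.continuous w A s).continuousAt.continuousWithinAt)
      (fun s hs => ?_) (fun s hs => ?_) ht htne, ?_, ?_⟩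
  · have := hmono hs.1 htstar hs.2
    rw [hderiv s hs.1]
    exact mul_pos hs.1 (by linarith)
  · have hs0 : 0 < s := htstar.trans hs
    have := hmono htstar hs0 hs
    rw [hderiv s hs0]
    exact mul_neg_of_pos_of_neg hs0 (by linarith)
  · have : primitive f (tstar * w) ≤ tstar ^ 2 * A / θ := by rw [le_div_iff₀ hθ0]; linarith
    have : (1 / 2 - 1 / θ) * A * tstar ^ 2 = tstar ^ 2 / 2 * A - tstar ^ 2 * A / θ := by ring
    linarith
  · have : 1 / θ < 1 / 2 := one_div_lt_one_div_of_lt two_pos hθ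
    exact mul_pos (mul_pos (sub_pos.mpr this) hA) (pow_pos htstar 2)

theorem fibering_functional_strict_max (f : ℝ → ℝ) (hf : Differentiable ℝ f)
    (hc : ∀ u : ℝ, u ≠ 0 → f u / u < deriv f u)
    (θ : ℝ) (hθ : 2 < θ)
    (hAR : ∀ u : ℝ, u ≠ 0 → 0 < θ * primitive f u ∧ θ * primitive f u ≤ u * f u)
    (w A tstar : ℝ) (hw : w ≠ 0) (hA : 0 < A) (htstar : 0 < tstar)
    (heq : f (tstar * w) * w = tstar * A)
    (huniq : ∀ t : ℝ, 0 < t → f (t * w) * w = t * A → t = tstar) :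
    (∀ t : ℝ, 0 < t → t ≠ tstar →
      t ^ 2 / 2 * A - primitive f (t * w)
        < tstar ^ 2 / 2 * A - primitive f (tstar * w)) ∧
    (1 / 2 - 1 / θ) * A * tstar ^ 2
        ≤ tstar ^ 2 / 2 * A - primitive f (tstar * w) ∧
    0 < (1 / 2 - 1 / θ) * A * tstar ^ 2 :=
  fibering_functional_strict_max_general f hf hc θ hθ hAR w A tstar hw hA htstar heq
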